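/- Every nonzero real binary cubic form can be brought by a real linear change of variables to exactly one of the four normal forms: x³/6, x²y/2, x³/6 + y³/6, or x²y/2 − xy²/2. -/

import Mathlib

open Matrix

/-- The binary cubic form with coefficients `a,b,c,d`:
`a x³ + b x²y + c xy² + d y³`. -/
def binCubic (a b c d : ℝ) : (Fin 2 → ℝ) → ℝ :=
  fun v => a * v 0 ^ 3 + b * v 0 ^ 2 * v 1 + c * v 0 * v 1 ^ 2 + d * v 1 ^ 3

/-- Equivalence of binary cubic forms under linear change of variables. -/
def CubicEquiv (F G : (Fin 2 → ℝ) → ℝ) : Prop :=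
  ∃ g : Matrix (Fin 2) (Fin 2) ℝ, IsUnit g.det ∧ ∀ v, F (g.mulVec v) = G v

/-- The four normal forms `x³/6`, `x²y/2`, `x³/6 + y³/6`, `x²y/2 − xy²/2`. -/
noncomputable def normalFormBinary : Fin 4 → (Fin 2 → ℝ) → ℝ
  | 0 => binCubic (1/6) 0 0 0
  | 1 => binCubic 0 (1/2) 0 0
  | 2 => binCubic (1/6) 0 0 (1/6)
  | 3 => binCubic 0 (1/2) (-(1/2)) 0

/-! Since `F(t, 1)` is a real cubic (or `F` has the factor `y`), `F` has a real linear factor,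
which a substitution turns into `x`: `F ~ a x³ + b x²y + c xy²`. Completing the square in `y`
leaves `e x³ + c xy²` unless `c = 0`, and rescaling `x`, `y` leaves only the sign of `ec`:
`x (x² + y²) ~ x³/6 + y³/6` and `x (x² - y²) ~ x²y/2 - xy²/2`; the degenerate cases give `x³/6`
and `x²y/2`. For uniqueness, a substitution multiplies the discriminant by `det⁶ > 0`, so its
sign separates `{x³, x²y}`, `x³ + y³` and `x²y - xy²`; and `x³` is a cube while `x²y` is not. -/

theorem CubicEquiv.symm {F G : (Fin 2 → ℝ) → ℝ} (h : CubicEquiv F G) : CubicEquiv G F := by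
  obtain ⟨g, hg, hgv⟩ := h
  refine ⟨g⁻¹, by simpa [det_nonsing_inv] using hg, fun v => ?_⟩
  rw [← hgv, mulVec_mulVec, mul_nonsing_inv g hg, one_mulVec]

theorem CubicEquiv.trans {F G H : (Fin 2 → ℝ) → ℝ} (hFG : CubicEquiv F G) (hGH : CubicEquiv G H) :
    CubicEquiv F H := by
  obtain ⟨g, hg, hgv⟩ := hFG
  obtain ⟨g', hg', hgv'⟩ := hGH
  refine ⟨g * g', by simpa [det_mul] using hg.mul hg', fun v => ?_⟩
  rw [← mulVec_mulVec, hgv, hgv']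

theorem CubicEquiv.eq_zero_iff {F G : (Fin 2 → ℝ) → ℝ} (h : CubicEquiv F G) : F = 0 ↔ G = 0 := by
  have h₀ {F G : (Fin 2 → ℝ) → ℝ} (h : CubicEquiv F G) (hF : F = 0) : G = 0 := by
    obtain ⟨g, -, hgv⟩ := h
    exact funext fun v => by rw [← hgv, hF, Pi.zero_apply, Pi.zero_apply]
  exact ⟨h₀ h, h₀ h.symm⟩

open Polynomial Filter in
theorem Real.exists_isRoot_of_odd_natDegree {P : ℝ[X]} (hP : Odd P.natDegree) :
    ∃ x, P.IsRoot x := by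
  wlog hlc : 0 < P.leadingCoeff generalizing P
  · have hP₀ : P ≠ 0 := by rintro rfl; simp at hP
    have hlc' : 0 < (-P).leadingCoeff := by
      rw [leadingCoeff_neg, neg_pos]
      exact lt_of_le_of_ne (not_lt.1 hlc) (leadingCoeff_ne_zero.2 hP₀)
    obtain ⟨x, hx⟩ := this (by rwa [natDegree_neg]) hlc'
    exact ⟨x, by simpa using hx⟩
  have hdeg : 0 < P.degree := natDegree_pos_iff_degree_pos.1 hP.pos
  have hlead : Tendsto (fun x => P.leadingCoeff * x ^ P.natDegree) atBot atBot := by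
    have hneg : (fun x : ℝ => P.leadingCoeff * x ^ P.natDegree) =
        fun x => -(P.leadingCoeff * (-x) ^ P.natDegree) := by
      funext x; rw [hP.neg_pow]; ring
    rw [hneg]
    exact tendsto_neg_atTop_atBot.comp <|
      ((tendsto_pow_atTop hP.pos.ne').const_mul_atTop hlc).comp tendsto_neg_atBot_atTop
  exact P.continuous.surjective (P.tendsto_atTop_of_leadingCoeff_nonneg hdeg hlc.le)
    (P.isEquivalent_atBot_lead.symm.tendsto_atBot hlead) 0

open Polynomial in
theorem exists_cubic_eq_zero {a : ℝ} (ha : a ≠ 0) (b c d : ℝ) :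
    ∃ t : ℝ, a * t ^ 3 + b * t ^ 2 + c * t + d = 0 := by
  obtain ⟨t, ht⟩ := Real.exists_isRoot_of_odd_natDegree
    (P := C a * X ^ 3 + C b * X ^ 2 + C c * X + C d) (by rw [natDegree_cubic ha]; decide)
  exact ⟨t, by simpa using ht⟩

theorem binCubic_mulVec (a b c d p q r s : ℝ) (v : Fin 2 → ℝ) :
    binCubic a b c d (!![p, q; r, s] *ᵥ v) =
      binCubic (a * p ^ 3 + b * p ^ 2 * r + c * p * r ^ 2 + d * r ^ 3)
        (3 * a * p ^ 2 * q + b * (p ^ 2 * s + 2 * p * q * r) + c * (2 * p * r * s + q * r ^ 2)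
          + 3 * d * r ^ 2 * s)
        (3 * a * p * q ^ 2 + b * (q ^ 2 * r + 2 * p * q * s) + c * (p * s ^ 2 + 2 * q * r * s)
          + 3 * d * r * s ^ 2)
        (a * q ^ 3 + b * q ^ 2 * s + c * q * s ^ 2 + d * s ^ 3) v := by
  simp only [binCubic, mulVec, dotProduct, Fin.sum_univ_two, of_apply, cons_val_zero,
    cons_val_one, cons_val', empty_val', cons_val_fin_one]
  ring

theorem binCubic_inj {a b c d a' b' c' d' : ℝ} :
    binCubic a b c d = binCubic a' b' c' d' ↔ a = a' ∧ b = b' ∧ c = c' ∧ d = d' := by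
  refine ⟨fun h => ?_, by rintro ⟨rfl, rfl, rfl, rfl⟩; rfl⟩
  have h₁ := congrFun h ![1, 0]
  have h₂ := congrFun h ![0, 1]
  have h₃ := congrFun h ![1, 1]
  have h₄ := congrFun h ![1, -1]
  simp only [binCubic, cons_val_zero, cons_val_one] at h₁ h₂ h₃ h₄
  refine ⟨by linarith, by linarith, by linarith, by linarith⟩

theorem binCubic_eq_zero_iff {a b c d : ℝ} :
    binCubic a b c d = 0 ↔ a = 0 ∧ b = 0 ∧ c = 0 ∧ d = 0 := by
  rw [← binCubic_inj]
  exact Eq.congr_right (funext fun v => by simp [binCubic])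

theorem cubicEquiv_binCubic_iff {a b c d a' b' c' d' : ℝ} :
    CubicEquiv (binCubic a b c d) (binCubic a' b' c' d') ↔
      ∃ p q r s : ℝ, p * s - q * r ≠ 0 ∧
        a' = a * p ^ 3 + b * p ^ 2 * r + c * p * r ^ 2 + d * r ^ 3 ∧
        b' = 3 * a * p ^ 2 * q + b * (p ^ 2 * s + 2 * p * q * r) + c * (2 * p * r * s + q * r ^ 2)
          + 3 * d * r ^ 2 * s ∧
        c' = 3 * a * p * q ^ 2 + b * (q ^ 2 * r + 2 * p * q * s) + c * (p * s ^ 2 + 2 * q * r * s)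
          + 3 * d * r * s ^ 2 ∧
        d' = a * q ^ 3 + b * q ^ 2 * s + c * q * s ^ 2 + d * s ^ 3 := by
  constructor
  · rintro ⟨g, hg, hgv⟩
    refine ⟨g 0 0, g 0 1, g 1 0, g 1 1, by rwa [← det_fin_two, ← isUnit_iff_ne_zero], ?_⟩
    have h := funext hgv
    rw [eta_fin_two g] at h
    simp only [binCubic_mulVec] at h
    obtain ⟨h₁, h₂, h₃, h₄⟩ := binCubic_inj.1 h
    exact ⟨h₁.symm, h₂.symm, h₃.symm, h₄.symm⟩
  · rintro ⟨p, q, r, s, hdet, rfl, rfl, rfl, rfl⟩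
    exact ⟨!![p, q; r, s], by simpa [det_fin_two_of] using hdet, binCubic_mulVec a b c d p q r s⟩

def disc (a b c d : ℝ) : ℝ :=
  18 * a * b * c * d - 4 * b ^ 3 * d + b ^ 2 * c ^ 2 - 4 * a * c ^ 3 - 27 * a ^ 2 * d ^ 2

theorem CubicEquiv.sign_disc_eq {a b c d a' b' c' d' : ℝ}
    (h : CubicEquiv (binCubic a b c d) (binCubic a' b' c' d')) :
    SignType.sign (disc a' b' c' d') = SignType.sign (disc a b c d) := by
  obtain ⟨p, q, r, s, hdet, rfl, rfl, rfl, rfl⟩ := cubicEquiv_binCubic_iff.1 h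
  calc _ = SignType.sign ((p * s - q * r) ^ 6 * disc a b c d) := by congr 1; unfold disc; ring
    _ = _ := by rw [sign_mul, sign_pos (Even.pow_pos (by decide) hdet), one_mul]

theorem not_cubicEquiv_cube_x2y (a : ℝ) {b : ℝ} (hb : b ≠ 0) :
    ¬ CubicEquiv (binCubic a 0 0 0) (binCubic 0 b 0 0) := by
  intro h
  obtain ⟨p, q, r, s, -, hp, hb', -, -⟩ := cubicEquiv_binCubic_iff.1 h
  have hap : a * p = 0 := pow_eq_zero_iff three_ne_zero |>.1 (by linear_combination -a ^ 2 * hp)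
  exact hb (by linear_combination hb' + 3 * p * q * hap)

theorem normalFormBinary_eq_of_cubicEquiv {i j : Fin 4}
    (h : CubicEquiv (normalFormBinary i) (normalFormBinary j)) : i = j := by
  fin_cases i <;> fin_cases j
  all_goals first
    | rfl
    | exact absurd h (not_cubicEquiv_cube_x2y _ (by norm_num))
    | exact absurd h.symm (not_cubicEquiv_cube_x2y _ (by norm_num))
    | have := h.sign_disc_eq
      norm_num [disc, sign_pos, sign_neg, eq_comm (a := (0 : SignType))] at this

theorem exists_cubicEquiv_binCubic_d_eq_zero (a b c d : ℝ) :
    ∃ a' b' c' : ℝ, CubicEquiv (binCubic a b c d) (binCubic a' b' c' 0) := by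
  rcases eq_or_ne a 0 with rfl | ha
  · exact ⟨d, c, b, cubicEquiv_binCubic_iff.2 ⟨0, 1, 1, 0, by norm_num, by ring, by ring, by ring,
      by ring⟩⟩
  · obtain ⟨t, ht⟩ := exists_cubic_eq_zero ha b c d
    exact ⟨_, _, _, cubicEquiv_binCubic_iff.2 ⟨1, t, 0, 1, by norm_num, rfl, rfl, rfl,
      by linear_combination -ht⟩⟩

theorem cubicEquiv_cube_normalFormBinary {a : ℝ} (ha : a ≠ 0) :
    CubicEquiv (binCubic a 0 0 0) (normalFormBinary 0) := by
  obtain ⟨t, ht⟩ := exists_cubic_eq_zero ha 0 0 (-1 / 6)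
  have ht₀ : t ≠ 0 := by rintro rfl; norm_num at ht
  exact cubicEquiv_binCubic_iff.2 ⟨t, 0, 0, 1, by simpa using ht₀, by linear_combination -ht,
    by ring, by ring, by ring⟩

theorem cubicEquiv_x2y_normalFormBinary (a : ℝ) {b : ℝ} (hb : b ≠ 0) :
    CubicEquiv (binCubic a b 0 0) (normalFormBinary 1) :=
  cubicEquiv_binCubic_iff.2 ⟨1, 0, -a / b, 1 / (2 * b), by simpa using hb, by field_simp; ring,
    by field_simp; ring, by ring, by ring⟩

theorem cubicEquiv_xy2_normalFormBinary {c : ℝ} (hc : c ≠ 0) :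
    CubicEquiv (binCubic 0 0 c 0) (normalFormBinary 1) :=
  cubicEquiv_binCubic_iff.2 ⟨0, 1 / (2 * c), 1, 0, by simpa using hc, by ring, by field_simp; ring,
    by ring, by ring⟩

theorem cubicEquiv_complete_square (a b : ℝ) {c : ℝ} (hc : c ≠ 0) :
    CubicEquiv (binCubic a b c 0) (binCubic (a - b ^ 2 / (4 * c)) 0 c 0) :=
  cubicEquiv_binCubic_iff.2 ⟨1, 0, -b / (2 * c), 1, by norm_num, by field_simp; ring,
    by field_simp; ring, by ring, by ring⟩

theorem cubicEquiv_x3_xy2_of_mul_pos {e c e' : ℝ} (h : 0 < e * c * e') :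
    CubicEquiv (binCubic e 0 c 0) (binCubic e' 0 1 0) := by
  have he : e ≠ 0 := by rintro rfl; simp at h
  obtain ⟨t, ht⟩ := exists_cubic_eq_zero he 0 0 (-e')
  have hct : 0 < c * t := by
    have hect : e * c * e' = (e * t) ^ 2 * (c * t) := by linear_combination (-(e * c)) * ht
    exact pos_of_mul_pos_right (hect ▸ h) (sq_nonneg _)
  have hs : c * t * √(c * t)⁻¹ ^ 2 = 1 := by
    rw [Real.sq_sqrt (inv_nonneg.2 hct.le), mul_inv_cancel₀ hct.ne']
  have hdet : t * √(c * t)⁻¹ - 0 * 0 ≠ 0 := by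
    rw [mul_zero, sub_zero]
    exact mul_ne_zero (by rintro rfl; simp at hct) (Real.sqrt_pos.2 (inv_pos.2 hct)).ne'
  exact cubicEquiv_binCubic_iff.2 ⟨t, 0, 0, √(c * t)⁻¹, hdet, by linear_combination -ht, by ring,
    by linear_combination -hs, by ring⟩

-- `x³/3 + xy² = ((x + y)³ + (x - y)³) / 6`
theorem cubicEquiv_normalFormBinary_two :
    CubicEquiv (binCubic (1 / 3) 0 1 0) (normalFormBinary 2) :=
  cubicEquiv_binCubic_iff.2 ⟨1 / 2, 1 / 2, 1 / 2, -1 / 2, by norm_num, by norm_num, by norm_num,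
    by norm_num, by norm_num⟩

-- `-x³ + xy² = x (y - x) (y + x)`, which is `XY(X - Y)/2` for `X = x + y`, `Y = y - x`
theorem cubicEquiv_normalFormBinary_three :
    CubicEquiv (binCubic (-1) 0 1 0) (normalFormBinary 3) :=
  cubicEquiv_binCubic_iff.2 ⟨1 / 2, -1 / 2, 1 / 2, 1 / 2, by norm_num, by norm_num, by norm_num,
    by norm_num, by norm_num⟩

theorem exists_cubicEquiv_normalFormBinary_of_x3_xy2 (e : ℝ) {c : ℝ} (hc : c ≠ 0) :
    ∃ i, CubicEquiv (binCubic e 0 c 0) (normalFormBinary i) := by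
  rcases lt_trichotomy (e * c) 0 with hec | hec | hec
  · exact ⟨3, (cubicEquiv_x3_xy2_of_mul_pos (e' := -1) (by linarith)).trans
      cubicEquiv_normalFormBinary_three⟩
  · obtain rfl : e = 0 := by simpa [hc] using hec
    exact ⟨1, cubicEquiv_xy2_normalFormBinary hc⟩
  · exact ⟨2, (cubicEquiv_x3_xy2_of_mul_pos (e' := 1 / 3) (by linarith)).trans
      cubicEquiv_normalFormBinary_two⟩

theorem exists_cubicEquiv_normalFormBinary_of_d_eq_zero {a b c : ℝ}
    (h : ¬(a = 0 ∧ b = 0 ∧ c = 0)) :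
    ∃ i, CubicEquiv (binCubic a b c 0) (normalFormBinary i) := by
  rcases eq_or_ne c 0 with rfl | hc
  · rcases eq_or_ne b 0 with rfl | hb
    · exact ⟨0, cubicEquiv_cube_normalFormBinary (by tauto)⟩
    · exact ⟨1, cubicEquiv_x2y_normalFormBinary a hb⟩
  · obtain ⟨i, hi⟩ := exists_cubicEquiv_normalFormBinary_of_x3_xy2 (a - b ^ 2 / (4 * c)) hc
    exact ⟨i, (cubicEquiv_complete_square a b hc).trans hi⟩

/-- Every nonzero real binary cubic form can be brought by a real linear
change of variables to exactly one of the four normal forms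
`x³/6`, `x²y/2`, `x³/6 + y³/6`, `x²y/2 − xy²/2`. -/
theorem binary_cubic_normal_forms (a b c d : ℝ) (h : ¬(a = 0 ∧ b = 0 ∧ c = 0 ∧ d = 0)) :
    ∃! i : Fin 4, CubicEquiv (binCubic a b c d) (normalFormBinary i) := by
  obtain ⟨a', b', c', hd⟩ := exists_cubicEquiv_binCubic_d_eq_zero a b c d
  have h' : ¬(a' = 0 ∧ b' = 0 ∧ c' = 0) := by
    simpa [binCubic_eq_zero_iff] using hd.eq_zero_iff.not.1 (binCubic_eq_zero_iff.not.2 h)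
  obtain ⟨i, hi⟩ := exists_cubicEquiv_normalFormBinary_of_d_eq_zero h'
  exact ⟨i, hd.trans hi, fun j hj =>
    normalFormBinary_eq_of_cubicEquiv ((hj.symm.trans hd).trans hi)⟩
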